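/- Let B×_f F be a (possibly degenerate) warped product of singular semi-Riemannian manifolds (B,g_B) and (F,g_F) with warping function f ∈ C^∞(B), let X,Y,Z be vector fields on B and U,V,W vector fields on F (identified with their lifts), and let P be a vector field on B. Let K̂ be the semi-symmetric non-metric Koszul form of B×_f F with respect to P, K̂_B that of (B,g_B) with respect to P, and K_F the Koszul form of (F,g_F). Then: (1) K̂(X,Y,Z) = K̂_B(X,Y,Z); (2) K̂(X,Y,W) = K̂(X,W,Y) = K̂(W,X,Y) = 0; (3) K̂(X,V,W) = −K̂(V,W,X) = f·g_F(V,W)·X(f); (4) K̂(V,X,W) = f·g_F(V,W)·X(f) + f²·g_B(X,P)·g_F(V,W); (5) K̂(U,V,W) = f²·K_F(U,V,W). -/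

import Mathlib

noncomputable section

/-!
An algebraic (Koszul-style) model of singular semi-Riemannian manifolds, following
Stoica's "singular semi-Riemannian geometry".

* `M` is the set of points of the smooth manifold;
* `T p` is the tangent space at `p : M`;
* `IsFn h` says that `h : M → ℝ` is a smooth function, i.e. `h ∈ C^∞(M)`;
* `IsVF X` says that the section `X : ∀ p, T p` of the tangent bundle is a smooth
  vector field, i.e. `X ∈ Γ(TM)`;
* `D X h` is the derivative `X(h)` of the smooth function `h` along `X`;
* `bracket X Y` is the Lie bracket `[X,Y]` of vector fields;
* `g` is the metric: a smooth symmetric bilinear form on the tangent bundle, which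
  may be degenerate and of variable signature.
-/
structure SSRM (M : Type*) (T : M → Type*)
    [∀ p, AddCommGroup (T p)] [∀ p, Module ℝ (T p)] where
  /-- the smooth real functions `C^∞(M)` -/
  IsFn : (M → ℝ) → Prop
  /-- the smooth vector fields `Γ(TM)` -/
  IsVF : (∀ p, T p) → Prop
  /-- the directional derivative `X(h)` of a function along a vector field -/
  D : (∀ p, T p) → (M → ℝ) → M → ℝ
  /-- the Lie bracket of vector fields -/
  bracket : (∀ p, T p) → (∀ p, T p) → ∀ p, T p
  /-- the (possibly degenerate) metric, pointwise a bilinear form -/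
  g : ∀ p, T p →ₗ[ℝ] T p →ₗ[ℝ] ℝ
  g_symm : ∀ p u v, g p u v = g p v u
  fn_const : ∀ c : ℝ, IsFn fun _ => c
  fn_add : ∀ a b, IsFn a → IsFn b → IsFn (a + b)
  fn_mul : ∀ a b, IsFn a → IsFn b → IsFn (a * b)
  vf_add : ∀ X Y, IsVF X → IsVF Y → IsVF (X + Y)
  vf_smul : ∀ a X, IsFn a → IsVF X → IsVF fun p => a p • X p
  vf_smulR : ∀ (r : ℝ) X, IsVF X → IsVF (r • X)
  g_smooth : ∀ X Y, IsVF X → IsVF Y → IsFn fun p => g p (X p) (Y p)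
  D_smooth : ∀ X a, IsVF X → IsFn a → IsFn (D X a)
  D_add_fn : ∀ X a b, IsVF X → IsFn a → IsFn b → D X (a + b) = D X a + D X b
  D_mul_fn : ∀ X a b, IsVF X → IsFn a → IsFn b → D X (a * b) = D X a * b + a * D X b
  D_const : ∀ X (c : ℝ), IsVF X → D X (fun _ => c) = 0
  D_add_vf : ∀ X Y a, IsVF X → IsVF Y → IsFn a → D (X + Y) a = D X a + D Y a
  D_smul_vf : ∀ b X a, IsFn b → IsVF X → IsFn a →
    D (fun p => b p • X p) a = b * D X a
  bracket_smooth : ∀ X Y, IsVF X → IsVF Y → IsVF (bracket X Y)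
  bracket_antisymm : ∀ X Y, IsVF X → IsVF Y → bracket X Y = -bracket Y X
  bracket_add_left : ∀ X Y Z, IsVF X → IsVF Y → IsVF Z →
    bracket (X + Y) Z = bracket X Z + bracket Y Z
  bracket_leibniz : ∀ X a Y, IsVF X → IsFn a → IsVF Y →
    bracket X (fun p => a p • Y p)
      = (fun p => a p • bracket X Y p) + (fun p => D X a p • Y p)
  D_bracket : ∀ X Y a, IsVF X → IsVF Y → IsFn a →
    D (bracket X Y) a = D X (D Y a) - D Y (D X a)

namespace SSRM

variable {M : Type*} {T : M → Type*} [∀ p, AddCommGroup (T p)] [∀ p, Module ℝ (T p)]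

/-- `⟨X,Y⟩ = g(X,Y)`, as a function on `M`. -/
def gf (S : SSRM M T) (X Y : ∀ p, T p) : M → ℝ := fun p => S.g p (X p) (Y p)

/-- The Koszul form
`K(X,Y,Z) = (1/2){X⟨Y,Z⟩ + Y⟨Z,X⟩ − Z⟨X,Y⟩ − ⟨X,[Y,Z]⟩ + ⟨Y,[Z,X]⟩ + ⟨Z,[X,Y]⟩}`. -/
def K (S : SSRM M T) (X Y Z : ∀ p, T p) : M → ℝ :=
  ((1 : ℝ) / 2) • (S.D X (S.gf Y Z) + S.D Y (S.gf Z X) - S.D Z (S.gf X Y)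
    - S.gf X (S.bracket Y Z) + S.gf Y (S.bracket Z X) + S.gf Z (S.bracket X Y))

/-- The semi-symmetric metric Koszul form (w.r.t. the vector field `P`):
`K̄(X,Y,Z) = K(X,Y,Z) + g(Y,P)g(X,Z) − g(X,Y)g(P,Z)`. -/
def Kbar (S : SSRM M T) (P X Y Z : ∀ p, T p) : M → ℝ :=
  S.K X Y Z + S.gf Y P * S.gf X Z - S.gf X Y * S.gf P Z

/-- The semi-symmetric non-metric Koszul form (w.r.t. the vector field `P`):
`K̂(X,Y,Z) = K(X,Y,Z) + g(Y,P)g(X,Z)`. -/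
def Khat (S : SSRM M T) (P X Y Z : ∀ p, T p) : M → ℝ :=
  S.K X Y Z + S.gf Y P * S.gf X Z

/-- The Lie derivative of the metric:
`(L_Y g)(Z,X) = Y(g(Z,X)) − g([Y,Z],X) − g(Z,[Y,X])`. -/
def lieD (S : SSRM M T) (Y Z X : ∀ p, T p) : M → ℝ :=
  S.D Y (S.gf Z X) - S.gf (S.bracket Y Z) X - S.gf Z (S.bracket Y X)

/-- `W ∈ Γ₀(TM)`: a smooth vector field with `g(W,Y) = 0` for every vector field `Y`. -/
def Gamma0 (S : SSRM M T) (W : ∀ p, T p) : Prop :=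
  S.IsVF W ∧ ∀ Y, S.IsVF Y → S.gf W Y = 0

/-- A 1-form `ω` (given by its action `ω(Z)` on vector fields) belongs to `A^•(M)`:
at every point `p` the covector `ω_p` lies in the image of the flat map
`v ↦ g_p(v,·) : T_pM → T_p*M`. -/
def MemAsup (S : SSRM M T) (ω : (∀ p, T p) → M → ℝ) : Prop :=
  ∀ p : M, ∃ v : T p, ∀ Z, S.IsVF Z → ω Z p = S.g p v (Z p)

/-- `(M,g)` is radical-stationary: `K(X,Y,·) ∈ A^•(M)` for all vector fields `X,Y`. -/
def RadicalStationary (S : SSRM M T) : Prop :=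
  ∀ X Y, S.IsVF X → S.IsVF Y → S.MemAsup fun Z => S.K X Y Z

/-- `Y^♭ = g(Y,·)`, as a 1-form. -/
def flat (S : SSRM M T) (Y : ∀ p, T p) : (∀ p, T p) → M → ℝ := fun Z => S.gf Y Z

/-- The semi-symmetric metric lower covariant derivative: `∇̄♭_X Y = K̄(X,Y,·)`. -/
def nablaFlatBar (S : SSRM M T) (P X Y : ∀ p, T p) : (∀ p, T p) → M → ℝ :=
  fun Z => S.Kbar P X Y Z

/-- The semi-symmetric non-metric lower covariant derivative: `∇̂♭_X Y = K̂(X,Y,·)`. -/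
def nablaFlatHat (S : SSRM M T) (P X Y : ∀ p, T p) : (∀ p, T p) → M → ℝ :=
  fun Z => S.Khat P X Y Z

/-- Pointwise application of a bundle map `J : TM → TM` to a vector field. -/
def Jv (J : ∀ p, T p →ₗ[ℝ] T p) (X : ∀ p, T p) : ∀ p, T p := fun p => J p (X p)

/-- `J` is an almost product structure on `(M,g)`: a smooth bundle map `J : TM → TM`
with `J² = id` and `g(JX,JY) = g(X,Y)`. -/
structure IsAlmostProduct (S : SSRM M T) (J : ∀ p, T p →ₗ[ℝ] T p) : Prop where
  invol : ∀ p v, J p (J p v) = v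
  compat : ∀ p u v, S.g p (J p u) (J p v) = S.g p u v
  smooth : ∀ X, S.IsVF X → S.IsVF (Jv J X)

/-- The almost product Koszul form `K̃(X,Y,Z) = (1/2)[K(X,Y,Z) + K(X,JY,JZ)]`. -/
def Ktilde (S : SSRM M T) (J : ∀ p, T p →ₗ[ℝ] T p) (X Y Z : ∀ p, T p) : M → ℝ :=
  ((1 : ℝ) / 2) • (S.K X Y Z + S.K X (Jv J Y) (Jv J Z))

/-- The almost product lower covariant derivative: `∇̃♭_X Y = K̃(X,Y,·)`. -/
def nablaFlatTilde (S : SSRM M T) (J : ∀ p, T p →ₗ[ℝ] T p) (X Y : ∀ p, T p) :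
    (∀ p, T p) → M → ℝ :=
  fun Z => S.Ktilde J X Y Z

end SSRM

namespace SSRM

variable {MB MF : Type*} {TB : MB → Type*} {TF : MF → Type*}
  [∀ p, AddCommGroup (TB p)] [∀ p, Module ℝ (TB p)]
  [∀ q, AddCommGroup (TF q)] [∀ q, Module ℝ (TF q)]

/-- The lift to the product `B × F` of a vector field on the base `B`. -/
def liftB (X : ∀ p, TB p) : ∀ pq : MB × MF, TB pq.1 × TF pq.2 :=
  fun pq => (X pq.1, 0)

/-- The lift to the product `B × F` of a vector field on the fiber `F`. -/
def liftF (U : ∀ q, TF q) : ∀ pq : MB × MF, TB pq.1 × TF pq.2 :=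
  fun pq => (0, U pq.2)

/-- `W` is the warped product `B ×_f F` of the singular semi-Riemannian manifolds
`B` and `F` with warping function `f ∈ C^∞(B)`: a singular semi-Riemannian structure
on the product manifold `B × F` whose metric is
`⟨x,y⟩ = g_B(dπ_B x, dπ_B y) + f(π_B p)² g_F(dπ_F x, dπ_F y)`, and whose smooth
structure, directional derivative and Lie bracket behave canonically on the lifts of
functions and of vector fields from the two factors. -/
structure IsWarpedProduct (B : SSRM MB TB) (F : SSRM MF TF) (f : MB → ℝ)
    (W : SSRM (MB × MF) fun pq => TB pq.1 × TF pq.2) : Prop where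
  smooth_f : B.IsFn f
  metric : ∀ (pq : MB × MF) (u v : TB pq.1 × TF pq.2),
    W.g pq u v = B.g pq.1 u.1 v.1 + f pq.1 ^ 2 * F.g pq.2 u.2 v.2
  fn_liftB : ∀ a, B.IsFn a → W.IsFn fun pq => a pq.1
  fn_liftF : ∀ b, F.IsFn b → W.IsFn fun pq => b pq.2
  vf_liftB : ∀ X, B.IsVF X → W.IsVF (liftB X)
  vf_liftF : ∀ U, F.IsVF U → W.IsVF (liftF U)
  D_liftB_fnB : ∀ X a, B.IsVF X → B.IsFn a →
    W.D (liftB X) (fun pq => a pq.1) = fun pq => B.D X a pq.1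
  D_liftB_fnF : ∀ X b, B.IsVF X → F.IsFn b →
    W.D (liftB X) (fun pq => b pq.2) = 0
  D_liftF_fnB : ∀ U a, F.IsVF U → B.IsFn a →
    W.D (liftF U) (fun pq => a pq.1) = 0
  D_liftF_fnF : ∀ U b, F.IsVF U → F.IsFn b →
    W.D (liftF U) (fun pq => b pq.2) = fun pq => F.D U b pq.2
  bracket_BB : ∀ X Y, B.IsVF X → B.IsVF Y →
    W.bracket (liftB X) (liftB Y) = liftB (B.bracket X Y)
  bracket_BF : ∀ X U, B.IsVF X → F.IsVF U →
    W.bracket (liftB X) (liftF U) = 0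
  bracket_FF : ∀ U V, F.IsVF U → F.IsVF V →
    W.bracket (liftF U) (liftF V) = liftF (F.bracket U V)

end SSRM

/-!
On lifts the warped metric splits as `g_B ⊕ f² g_F`, lifts of base and fibre fields commute, and a
lifted base field differentiates only the factor `f²` of the fibre part of the metric while a lifted
fibre field differentiates only its factor `g_F`. Substituting this into the six terms of the Koszul
formula gives `K` on every triple of lifts. Since `P` is a base field, the correction
`g(Y,P) g(X,Z)` of `K̂` vanishes when `Y` is a fibre field or exactly one of `X, Z` is, so it only
survives in (1), and in (4) as `f² g_B(X,P) g_F(V,W)`.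
-/

namespace SSRM

section

variable {M : Type*} {T : M → Type*} [∀ p, AddCommGroup (T p)] [∀ p, Module ℝ (T p)]
  (S : SSRM M T)

theorem gf_comm (X Y : ∀ p, T p) : S.gf X Y = S.gf Y X :=
  funext fun p => S.g_symm p (X p) (Y p)

theorem gf_zero_right (X : ∀ p, T p) : S.gf X 0 = 0 :=
  funext fun p => by simp [gf]

variable {S}

theorem D_zero {X : ∀ p, T p} (hX : S.IsVF X) : S.D X 0 = 0 :=
  S.D_const X 0 hX

theorem D_sq {X : ∀ p, T p} {a : M → ℝ} (hX : S.IsVF X) (ha : S.IsFn a) :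
    S.D X (fun p => a p ^ 2) = fun p => 2 * a p * S.D X a p := by
  have hsq : (fun p => a p ^ 2) = a * a := funext fun p => sq (a p)
  rw [hsq, S.D_mul_fn X a a hX ha ha]
  funext p
  simp only [Pi.add_apply, Pi.mul_apply]
  ring

theorem isFn_gf {X Y : ∀ p, T p} (hX : S.IsVF X) (hY : S.IsVF Y) : S.IsFn (S.gf X Y) :=
  S.g_smooth X Y hX hY

theorem isFn_sq {a : M → ℝ} (ha : S.IsFn a) : S.IsFn fun p => a p ^ 2 := by
  have hsq : (fun p => a p ^ 2) = a * a := funext fun p => sq (a p)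
  exact hsq ▸ S.fn_mul a a ha ha

theorem Khat_eq_K_of_gf_left {P X Y Z : ∀ p, T p} (h : S.gf Y P = 0) :
    S.Khat P X Y Z = S.K X Y Z := by
  simp [Khat, h]

theorem Khat_eq_K_of_gf_right {P X Y Z : ∀ p, T p} (h : S.gf X Z = 0) :
    S.Khat P X Y Z = S.K X Y Z := by
  simp [Khat, h]

end

namespace IsWarpedProduct

variable {MB MF : Type*} {TB : MB → Type*} {TF : MF → Type*}
  [∀ p, AddCommGroup (TB p)] [∀ p, Module ℝ (TB p)]
  [∀ q, AddCommGroup (TF q)] [∀ q, Module ℝ (TF q)]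
  {B : SSRM MB TB} {F : SSRM MF TF} {f : MB → ℝ}
  {Wp : SSRM (MB × MF) fun pq => TB pq.1 × TF pq.2}
  (h : IsWarpedProduct B F f Wp)
include h

theorem gf_liftB_liftB (X Y : ∀ p, TB p) :
    Wp.gf (liftB X) (liftB Y) = fun pq => B.gf X Y pq.1 :=
  funext fun pq => by simp [gf, liftB, h.metric]

theorem gf_liftB_liftF (X : ∀ p, TB p) (U : ∀ q, TF q) :
    Wp.gf (liftB X) (liftF U) = 0 :=
  funext fun pq => by simp [gf, liftB, liftF, h.metric]

theorem gf_liftF_liftB (U : ∀ q, TF q) (X : ∀ p, TB p) :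
    Wp.gf (liftF U) (liftB X) = 0 :=
  funext fun pq => by simp [gf, liftB, liftF, h.metric]

theorem gf_liftF_liftF (U V : ∀ q, TF q) :
    Wp.gf (liftF U) (liftF V) = fun pq => f pq.1 ^ 2 * F.gf U V pq.2 :=
  funext fun pq => by simp [gf, liftF, h.metric]

theorem bracket_FB {U : ∀ q, TF q} {X : ∀ p, TB p} (hU : F.IsVF U) (hX : B.IsVF X) :
    Wp.bracket (liftF U) (liftB X) = 0 := by
  rw [Wp.bracket_antisymm _ _ (h.vf_liftF U hU) (h.vf_liftB X hX), h.bracket_BF X U hX hU,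
    neg_zero]

theorem D_liftB_mul {X : ∀ p, TB p} {a : MB → ℝ} {b : MF → ℝ} (hX : B.IsVF X)
    (ha : B.IsFn a) (hb : F.IsFn b) :
    Wp.D (liftB X) (fun pq => a pq.1 * b pq.2) = fun pq => B.D X a pq.1 * b pq.2 := by
  change Wp.D (liftB X) ((fun pq => a pq.1) * fun pq => b pq.2) = _
  rw [Wp.D_mul_fn _ _ _ (h.vf_liftB X hX) (h.fn_liftB a ha) (h.fn_liftF b hb),
    h.D_liftB_fnB X a hX ha, h.D_liftB_fnF X b hX hb, mul_zero, add_zero]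
  rfl

theorem D_liftF_mul {U : ∀ q, TF q} {a : MB → ℝ} {b : MF → ℝ} (hU : F.IsVF U)
    (ha : B.IsFn a) (hb : F.IsFn b) :
    Wp.D (liftF U) (fun pq => a pq.1 * b pq.2) = fun pq => a pq.1 * F.D U b pq.2 := by
  change Wp.D (liftF U) ((fun pq => a pq.1) * fun pq => b pq.2) = _
  rw [Wp.D_mul_fn _ _ _ (h.vf_liftF U hU) (h.fn_liftB a ha) (h.fn_liftF b hb),
    h.D_liftF_fnB U a hU ha, h.D_liftF_fnF U b hU hb, zero_mul, zero_add]
  rfl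

theorem D_liftB_fiberMetric {X : ∀ p, TB p} {U V : ∀ q, TF q} (hX : B.IsVF X)
    (hU : F.IsVF U) (hV : F.IsVF V) :
    Wp.D (liftB X) (fun pq => f pq.1 ^ 2 * F.gf U V pq.2)
      = fun pq => 2 * f pq.1 * B.D X f pq.1 * F.gf U V pq.2 := by
  rw [h.D_liftB_mul hX (B.isFn_sq h.smooth_f) (F.isFn_gf hU hV), B.D_sq hX h.smooth_f]

theorem D_liftF_fiberMetric {U V W : ∀ q, TF q} (hU : F.IsVF U) (hV : F.IsVF V)
    (hW : F.IsVF W) :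
    Wp.D (liftF U) (fun pq => f pq.1 ^ 2 * F.gf V W pq.2)
      = fun pq => f pq.1 ^ 2 * F.D U (F.gf V W) pq.2 :=
  h.D_liftF_mul hU (B.isFn_sq h.smooth_f) (F.isFn_gf hV hW)

variable {X Y Z : ∀ p, TB p} {U V W : ∀ q, TF q}

theorem K_BBB (hX : B.IsVF X) (hY : B.IsVF Y) (hZ : B.IsVF Z) :
    Wp.K (liftB X) (liftB Y) (liftB Z) = fun pq => B.K X Y Z pq.1 := by
  funext pq
  simp only [K, h.gf_liftB_liftB, h.D_liftB_fnB, h.bracket_BB, B.isFn_gf, hX, hY, hZ,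
    Pi.smul_apply, Pi.add_apply, Pi.sub_apply]

theorem K_BBF (hX : B.IsVF X) (hY : B.IsVF Y) (hW : F.IsVF W) :
    Wp.K (liftB X) (liftB Y) (liftF W) = 0 := by
  funext pq
  simp only [K, h.gf_liftB_liftB, h.gf_liftB_liftF, h.gf_liftF_liftB, gf_zero_right, D_zero,
    h.vf_liftB, h.D_liftF_fnB, B.isFn_gf, h.bracket_BB, h.bracket_BF, h.bracket_FB, hX, hY, hW,
    Pi.smul_apply, Pi.add_apply, Pi.sub_apply, Pi.zero_apply, smul_eq_mul]
  ring

theorem K_BFB (hX : B.IsVF X) (hY : B.IsVF Y) (hW : F.IsVF W) :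
    Wp.K (liftB X) (liftF W) (liftB Y) = 0 := by
  funext pq
  simp only [K, h.gf_liftB_liftB, h.gf_liftB_liftF, h.gf_liftF_liftB, gf_zero_right, D_zero,
    h.vf_liftB, h.D_liftF_fnB, B.isFn_gf, h.bracket_BB, h.bracket_BF, h.bracket_FB, hX, hY, hW,
    Pi.smul_apply, Pi.add_apply, Pi.sub_apply, Pi.zero_apply, smul_eq_mul]
  ring

theorem K_FBB (hX : B.IsVF X) (hY : B.IsVF Y) (hW : F.IsVF W) :
    Wp.K (liftF W) (liftB X) (liftB Y) = 0 := by
  funext pq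
  simp only [K, h.gf_liftB_liftB, h.gf_liftB_liftF, h.gf_liftF_liftB, gf_zero_right, D_zero,
    h.vf_liftB, h.D_liftF_fnB, B.isFn_gf, h.bracket_BB, h.bracket_BF, h.bracket_FB, hX, hY, hW,
    Pi.smul_apply, Pi.add_apply, Pi.sub_apply, Pi.zero_apply, smul_eq_mul]
  ring

theorem K_BFF (hX : B.IsVF X) (hV : F.IsVF V) (hW : F.IsVF W) :
    Wp.K (liftB X) (liftF V) (liftF W) = fun pq => f pq.1 * F.gf V W pq.2 * B.D X f pq.1 := by
  funext pq
  simp only [K, h.gf_liftF_liftF, h.gf_liftB_liftF, h.gf_liftF_liftB, gf_zero_right, D_zero,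
    h.vf_liftF, h.D_liftB_fiberMetric, h.bracket_BF, h.bracket_FB, h.bracket_FF, hX, hV, hW,
    Pi.smul_apply, Pi.add_apply, Pi.sub_apply, Pi.zero_apply, smul_eq_mul]
  ring

theorem K_FFB (hX : B.IsVF X) (hV : F.IsVF V) (hW : F.IsVF W) :
    Wp.K (liftF V) (liftF W) (liftB X) = fun pq => -(f pq.1 * F.gf V W pq.2 * B.D X f pq.1) := by
  funext pq
  simp only [K, h.gf_liftF_liftF, h.gf_liftB_liftF, h.gf_liftF_liftB, gf_zero_right, D_zero,
    h.vf_liftF, h.D_liftB_fiberMetric, h.bracket_BF, h.bracket_FB, h.bracket_FF, hX, hV, hW,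
    Pi.smul_apply, Pi.add_apply, Pi.sub_apply, Pi.zero_apply, smul_eq_mul]
  ring

theorem K_FBF (hX : B.IsVF X) (hV : F.IsVF V) (hW : F.IsVF W) :
    Wp.K (liftF V) (liftB X) (liftF W) = fun pq => f pq.1 * F.gf V W pq.2 * B.D X f pq.1 := by
  funext pq
  simp only [K, h.gf_liftF_liftF, h.gf_liftB_liftF, h.gf_liftF_liftB, gf_zero_right, D_zero,
    h.vf_liftF, h.D_liftB_fiberMetric, h.bracket_BF, h.bracket_FB, h.bracket_FF, F.gf_comm W V,
    hX, hV, hW, Pi.smul_apply, Pi.add_apply, Pi.sub_apply, Pi.zero_apply, smul_eq_mul]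
  ring

theorem K_FFF (hU : F.IsVF U) (hV : F.IsVF V) (hW : F.IsVF W) :
    Wp.K (liftF U) (liftF V) (liftF W) = fun pq => f pq.1 ^ 2 * F.K U V W pq.2 := by
  funext pq
  simp only [K, h.gf_liftF_liftF, h.D_liftF_fiberMetric, h.bracket_FF, hU, hV, hW,
    Pi.smul_apply, Pi.add_apply, Pi.sub_apply, smul_eq_mul]
  ring

end IsWarpedProduct

end SSRM

theorem semiSymmetricNonMetricKoszul_warpedProduct_baseP_general
    {MB MF : Type*} {TB : MB → Type*} {TF : MF → Type*}
    [∀ p, AddCommGroup (TB p)] [∀ p, Module ℝ (TB p)]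
    [∀ q, AddCommGroup (TF q)] [∀ q, Module ℝ (TF q)]
    (B : SSRM MB TB) (F : SSRM MF TF) (f : MB → ℝ)
    (Wp : SSRM (MB × MF) fun pq => TB pq.1 × TF pq.2)
    (hWp : SSRM.IsWarpedProduct B F f Wp)
    (X Y Z P : ∀ p, TB p) (hX : B.IsVF X) (hY : B.IsVF Y) (hZ : B.IsVF Z)
    (U V W : ∀ q, TF q) (hU : F.IsVF U) (hV : F.IsVF V) (hW : F.IsVF W) :
    -- (1) `K̂(X,Y,Z) = K̂_B(X,Y,Z)`
    Wp.Khat (SSRM.liftB P) (SSRM.liftB X) (SSRM.liftB Y) (SSRM.liftB Z)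
      = (fun pq => B.Khat P X Y Z pq.1) ∧
    -- (2) `K̂(X,Y,W) = K̂(X,W,Y) = K̂(W,X,Y) = 0`
    Wp.Khat (SSRM.liftB P) (SSRM.liftB X) (SSRM.liftB Y) (SSRM.liftF W) = 0 ∧
    Wp.Khat (SSRM.liftB P) (SSRM.liftB X) (SSRM.liftF W) (SSRM.liftB Y) = 0 ∧
    Wp.Khat (SSRM.liftB P) (SSRM.liftF W) (SSRM.liftB X) (SSRM.liftB Y) = 0 ∧
    -- (3) `K̂(X,V,W) = −K̂(V,W,X) = f·g_F(V,W)·X(f)`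
    Wp.Khat (SSRM.liftB P) (SSRM.liftB X) (SSRM.liftF V) (SSRM.liftF W)
      = -Wp.Khat (SSRM.liftB P) (SSRM.liftF V) (SSRM.liftF W) (SSRM.liftB X) ∧
    Wp.Khat (SSRM.liftB P) (SSRM.liftB X) (SSRM.liftF V) (SSRM.liftF W)
      = (fun pq => f pq.1 * F.gf V W pq.2 * B.D X f pq.1) ∧
    -- (4) `K̂(V,X,W) = f·g_F(V,W)·X(f) + f²·g_B(X,P)·g_F(V,W)`
    Wp.Khat (SSRM.liftB P) (SSRM.liftF V) (SSRM.liftB X) (SSRM.liftF W)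
      = (fun pq => f pq.1 * F.gf V W pq.2 * B.D X f pq.1
          + f pq.1 ^ 2 * B.gf X P pq.1 * F.gf V W pq.2) ∧
    -- (5) `K̂(U,V,W) = f²·K_F(U,V,W)`
    Wp.Khat (SSRM.liftB P) (SSRM.liftF U) (SSRM.liftF V) (SSRM.liftF W)
      = (fun pq => f pq.1 ^ 2 * F.K U V W pq.2) := by
  refine ⟨?_, ?_, ?_, ?_, ?_, ?_, ?_, ?_⟩
  · funext pq
    simp only [SSRM.Khat, hWp.K_BBB hX hY hZ, hWp.gf_liftB_liftB, Pi.add_apply, Pi.mul_apply]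
  · rw [SSRM.Khat_eq_K_of_gf_right (hWp.gf_liftB_liftF X W), hWp.K_BBF hX hY hW]
  · rw [SSRM.Khat_eq_K_of_gf_left (hWp.gf_liftF_liftB W P), hWp.K_BFB hX hY hW]
  · rw [SSRM.Khat_eq_K_of_gf_right (hWp.gf_liftF_liftB W Y), hWp.K_FBB hX hY hW]
  · rw [SSRM.Khat_eq_K_of_gf_left (hWp.gf_liftF_liftB V P),
      SSRM.Khat_eq_K_of_gf_left (hWp.gf_liftF_liftB W P), hWp.K_BFF hX hV hW, hWp.K_FFB hX hV hW]
    funext pq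
    rw [Pi.neg_apply, neg_neg]
  · rw [SSRM.Khat_eq_K_of_gf_left (hWp.gf_liftF_liftB V P), hWp.K_BFF hX hV hW]
  · funext pq
    simp only [SSRM.Khat, hWp.K_FBF hX hV hW, hWp.gf_liftB_liftB, hWp.gf_liftF_liftF,
      Pi.add_apply, Pi.mul_apply]
    ring
  · rw [SSRM.Khat_eq_K_of_gf_left (hWp.gf_liftF_liftB V P), hWp.K_FFF hU hV hW]

/-- Proposition 3.13: the semi-symmetric non-metric Koszul form of
a (possibly degenerate) warped product `B ×_f F`, with respect to a vector field
`P ∈ Γ(TB)`, on lifts of vector fields `X,Y,Z ∈ Γ(TB)` and `U,V,W ∈ Γ(TF)`, in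
terms of the data on the factors. -/
theorem semiSymmetricNonMetricKoszul_warpedProduct_baseP
    {MB MF : Type*} {TB : MB → Type*} {TF : MF → Type*}
    [∀ p, AddCommGroup (TB p)] [∀ p, Module ℝ (TB p)]
    [∀ q, AddCommGroup (TF q)] [∀ q, Module ℝ (TF q)]
    (B : SSRM MB TB) (F : SSRM MF TF) (f : MB → ℝ)
    (Wp : SSRM (MB × MF) fun pq => TB pq.1 × TF pq.2)
    (hWp : SSRM.IsWarpedProduct B F f Wp)
    (X Y Z P : ∀ p, TB p) (hX : B.IsVF X) (hY : B.IsVF Y) (hZ : B.IsVF Z)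
    (hP : B.IsVF P)
    (U V W : ∀ q, TF q) (hU : F.IsVF U) (hV : F.IsVF V) (hW : F.IsVF W) :
    -- (1) `K̂(X,Y,Z) = K̂_B(X,Y,Z)`
    Wp.Khat (SSRM.liftB P) (SSRM.liftB X) (SSRM.liftB Y) (SSRM.liftB Z)
      = (fun pq => B.Khat P X Y Z pq.1) ∧
    -- (2) `K̂(X,Y,W) = K̂(X,W,Y) = K̂(W,X,Y) = 0`
    Wp.Khat (SSRM.liftB P) (SSRM.liftB X) (SSRM.liftB Y) (SSRM.liftF W) = 0 ∧
    Wp.Khat (SSRM.liftB P) (SSRM.liftB X) (SSRM.liftF W) (SSRM.liftB Y) = 0 ∧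
    Wp.Khat (SSRM.liftB P) (SSRM.liftF W) (SSRM.liftB X) (SSRM.liftB Y) = 0 ∧
    -- (3) `K̂(X,V,W) = −K̂(V,W,X) = f·g_F(V,W)·X(f)`
    Wp.Khat (SSRM.liftB P) (SSRM.liftB X) (SSRM.liftF V) (SSRM.liftF W)
      = -Wp.Khat (SSRM.liftB P) (SSRM.liftF V) (SSRM.liftF W) (SSRM.liftB X) ∧
    Wp.Khat (SSRM.liftB P) (SSRM.liftB X) (SSRM.liftF V) (SSRM.liftF W)
      = (fun pq => f pq.1 * F.gf V W pq.2 * B.D X f pq.1) ∧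
    -- (4) `K̂(V,X,W) = f·g_F(V,W)·X(f) + f²·g_B(X,P)·g_F(V,W)`
    Wp.Khat (SSRM.liftB P) (SSRM.liftF V) (SSRM.liftB X) (SSRM.liftF W)
      = (fun pq => f pq.1 * F.gf V W pq.2 * B.D X f pq.1
          + f pq.1 ^ 2 * B.gf X P pq.1 * F.gf V W pq.2) ∧
    -- (5) `K̂(U,V,W) = f²·K_F(U,V,W)`
    Wp.Khat (SSRM.liftB P) (SSRM.liftF U) (SSRM.liftF V) (SSRM.liftF W)
      = (fun pq => f pq.1 ^ 2 * F.K U V W pq.2) :=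
  semiSymmetricNonMetricKoszul_warpedProduct_baseP_general B F f Wp hWp X Y Z P hX hY hZ U V W hU hV
    hW
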